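/- arXiv:1312.0060 — 6 statements merged into one kernel-verified Lean document; each statement's English description precedes it below -/
import Mathlib

section
/- Let (H_m, H_z) be a pair of nonnegative real random variables and let H_e be a nonnegative real random variable, and let P_t, P_j ≥ 0 be constants. Define the effective main channel gain H* := H_m/(1 + P_j·H_z). Suppose the cdfs of H* and of H_e are continuous and H_e stochastically dominates H*, i.e. F_{H_e}(a) ≤ F_{H*}(a) for all a. Then there exists a probability space carrying random variables (H̃_m, H̃_e, H̃_z) such that (H̃_m, H̃_z) has the same joint law as (H_m, H_z), H̃_e has the same law as H_e, and E[ max( ln(1 + P_t·H̃_m/(1 + P_j·H̃_z)) − ln(1 + P_t·H̃_e), 0 ) ] = 0. -/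
/-!
Quantile coupling. Let `μ*` be the law of `H* = H_m / (1 + P_j H_z)`, `F*` its cdf and `Q_e` the
quantile function of the law of `H_e`. As `F*` is continuous, `F*(H*)` is uniform on `(0, 1)`, so
`H̃_e := Q_e (F*(H*))` has the law of `H_e`. Dominance `F_e ≤ F*` gives `Q_{μ*} ≤ Q_e`, and
`Q_{μ*}(F*(x)) = x` for `μ*`-a.e. `x`, because `Q_{μ*}(F*(x)) ≤ x` and both sides have
law `μ*`. Hence `H* ≤ H̃_e` almost surely, and the positive part of
`ln(1 + P_t H*) - ln(1 + P_t H̃_e)` vanishes almost surely.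
-/

open MeasureTheory Set ProbabilityTheory

instance : IsProbabilityMeasure (volume.restrict (Ioo (0 : ℝ) 1)) := ⟨by simp⟩

lemma volume_restrict_Ioo_zero_one_Iic (t : ℝ) :
    volume.restrict (Ioo (0 : ℝ) 1) (Iic t) = ENNReal.ofReal (min t 1) := by
  rw [Measure.restrict_apply measurableSet_Iic,
    ← measure_congr (Iio_ae_eq_Iic.inter (ae_eq_refl (Ioo (0 : ℝ) 1))), Iio_inter_Ioo]
  simp [ENNReal.ofReal_min]

lemma ae_eq_of_ae_le_of_map_eq {α : Type*} [MeasurableSpace α] {μ : Measure α}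
    [IsFiniteMeasure μ] {f g : α → ℝ} (hf : AEMeasurable f μ) (hg : AEMeasurable g μ)
    (hfg : f ≤ᵐ[μ] g) (hmap : μ.map f = μ.map g) : f =ᵐ[μ] g := by
  have hsublevel : ∀ q : ℚ, {x | g x ≤ q} =ᵐ[μ] {x | f x ≤ q} := fun q =>
    ae_eq_of_ae_subset_of_measure_ge (hfg.mono fun x hx hgx => hx.trans hgx)
      (show μ (f ⁻¹' Iic q) ≤ μ (g ⁻¹' Iic q) by
        rw [← Measure.map_apply_of_aemeasurable hf measurableSet_Iic,
          ← Measure.map_apply_of_aemeasurable hg measurableSet_Iic, hmap])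
      (hg.nullMeasurable measurableSet_Iic) (measure_ne_top _ _)
  filter_upwards [hfg, ae_all_iff.2 hsublevel] with x hle hsame
  refine hle.antisymm (le_of_not_gt fun hlt => ?_)
  obtain ⟨q, hfq, hqg⟩ := exists_rat_btwn hlt
  exact hqg.not_ge ((iff_of_eq (hsame q)).2 hfq.le)

namespace ProbabilityTheory

variable {μ ν : Measure ℝ}

noncomputable def quantile (μ : Measure ℝ) : ℝ → ℝ :=
  (Ioo 0 1).indicator fun u => sInf {x | u ≤ cdf μ x}

lemma quantile_le_iff {u : ℝ} (hu : u ∈ Ioo 0 1) (a : ℝ) :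
    quantile μ u ≤ a ↔ u ≤ cdf μ a := by
  set S := {x | u ≤ cdf μ x}
  have hbdd : BddBelow S := by
    obtain ⟨b, hb⟩ :=
      ((tendsto_cdf_atBot μ).eventually (gt_mem_nhds hu.1)).exists_forall_of_atBot
    exact ⟨b, fun x hx => le_of_not_ge fun hxb => (hb x hxb).not_ge hx⟩
  have hne : S.Nonempty :=
    ((tendsto_cdf_atTop μ).eventually (lt_mem_nhds hu.2)).exists.imp fun _ h => h.le
  have hmem : u ≤ cdf μ (sInf S) := by
    refine ge_of_tendsto (((cdf μ).right_continuous _).mono Ioi_subset_Ici_self)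
      (eventually_nhdsWithin_of_forall fun x hx => ?_)
    obtain ⟨s, hs, hsx⟩ := exists_lt_of_csInf_lt hne hx
    exact hs.trans (monotone_cdf μ hsx.le)
  rw [quantile, indicator_of_mem hu]
  exact ⟨fun h => hmem.trans (monotone_cdf μ h), fun h => csInf_le hbdd h⟩

lemma quantile_of_notMem {u : ℝ} (hu : u ∉ Ioo 0 1) : quantile μ u = 0 :=
  indicator_of_notMem hu _

lemma le_cdf_quantile {u : ℝ} (hu : u ∈ Ioo 0 1) : u ≤ cdf μ (quantile μ u) :=
  (quantile_le_iff hu _).1 le_rfl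

lemma measurable_quantile : Measurable (quantile μ) := by
  refine measurable_of_restrict_of_restrict_compl (s := Ioo 0 1) measurableSet_Ioo ?_ ?_
  · exact Monotone.measurable fun u v huv =>
      (quantile_le_iff u.2 _).2 ((Subtype.coe_le_coe.2 huv).trans (le_cdf_quantile v.2))
  · convert measurable_const (a := (0 : ℝ)) with u
    exact quantile_of_notMem u.2

lemma quantile_le_quantile_of_cdf_le (h : ∀ x, cdf ν x ≤ cdf μ x) (u : ℝ) :
    quantile μ u ≤ quantile ν u := by
  by_cases hu : u ∈ Ioo 0 1
  · exact (quantile_le_iff hu _).2 ((le_cdf_quantile hu).trans (h _))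
  · rw [quantile_of_notMem hu, quantile_of_notMem hu]

lemma map_quantile_volume [IsProbabilityMeasure μ] :
    (volume.restrict (Ioo 0 1)).map (quantile μ) = μ := by
  refine Measure.ext_of_Iic _ _ fun a => ?_
  have hpre : quantile μ ⁻¹' Iic a ∩ Ioo 0 1 = Iic (cdf μ a) ∩ Ioo 0 1 := by
    ext u
    simp only [mem_inter_iff, mem_preimage, mem_Iic]
    exact and_congr_left (quantile_le_iff · a)
  rw [Measure.map_apply measurable_quantile measurableSet_Iic,
    Measure.restrict_apply (measurable_quantile measurableSet_Iic), hpre,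
    ← Measure.restrict_apply measurableSet_Iic, volume_restrict_Ioo_zero_one_Iic,
    min_eq_left (cdf_le_one μ a), ofReal_cdf]

lemma map_cdf_eq_volume [IsProbabilityMeasure μ] (hμ : Continuous (cdf μ)) :
    μ.map (cdf μ) = volume.restrict (Ioo 0 1) := by
  have hsurj : ∀ s ∈ Ioo (0 : ℝ) 1, ∃ c, cdf μ c = s := fun s hs =>
    mem_range_of_exists_le_of_exists_ge hμ
      ((tendsto_cdf_atBot μ).eventually (ge_mem_nhds hs.1)).exists
      ((tendsto_cdf_atTop μ).eventually (le_mem_nhds hs.2)).exists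
  refine Measure.ext_of_Iic _ _ fun t => ?_
  rw [Measure.map_apply (monotone_cdf μ).measurable measurableSet_Iic,
    volume_restrict_Ioo_zero_one_Iic]
  rcases lt_or_ge t 0 with ht0 | ht0
  · have : cdf μ ⁻¹' Iic t = ∅ :=
      eq_empty_of_forall_notMem fun x hx => (cdf_nonneg μ x).not_gt (lt_of_le_of_lt hx ht0)
    simp [this, ENNReal.ofReal_of_nonpos (min_le_of_left_le ht0.le)]
  rcases le_or_gt 1 t with ht1 | ht1
  · have : cdf μ ⁻¹' Iic t = univ := eq_univ_of_forall fun x => (cdf_le_one μ x).trans ht1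
    simp [this, min_eq_right ht1]
  rw [min_eq_left ht1.le]
  refine le_antisymm (le_of_forall_gt_imp_ge_of_dense fun a ha => ?_) ?_
  · rcases le_or_gt 1 a with ha1 | ha1
    · exact prob_le_one.trans ha1
    have hta : t < a.toReal := (ENNReal.ofReal_lt_iff_lt_toReal ht0 ha1.ne_top).1 ha
    obtain ⟨c, hc⟩ :=
      hsurj a.toReal ⟨ht0.trans_lt hta, ENNReal.toReal_lt_of_lt_ofReal (by simpa using ha1)⟩
    calc μ (cdf μ ⁻¹' Iic t) ≤ μ (Iic c) := measure_mono fun x hx => le_of_not_gt fun hcx =>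
            (hc ▸ hta).not_ge ((monotone_cdf μ hcx.le).trans hx)
      _ = a := by rw [← ofReal_cdf, hc, ENNReal.ofReal_toReal ha1.ne_top]
  · rcases ht0.eq_or_lt with rfl | ht0
    · simp
    obtain ⟨c, hc⟩ := hsurj t ⟨ht0, ht1⟩
    calc ENNReal.ofReal t = μ (Iic c) := by rw [← ofReal_cdf, hc]
      _ ≤ μ (cdf μ ⁻¹' Iic t) := measure_mono fun x hx => (monotone_cdf μ hx).trans_eq hc

lemma ae_quantile_cdf_eq [IsProbabilityMeasure μ] (hμ : Continuous (cdf μ)) :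
    ∀ᵐ x ∂μ, quantile μ (cdf μ x) = x := by
  have hcdf : Measurable (cdf μ) := (monotone_cdf μ).measurable
  have hmem : ∀ᵐ x ∂μ, cdf μ x ∈ Ioo 0 1 := ae_of_ae_map hcdf.aemeasurable <| by
    rw [map_cdf_eq_volume hμ]
    exact ae_restrict_mem measurableSet_Ioo
  refine ae_eq_of_ae_le_of_map_eq (f := quantile μ ∘ cdf μ) (g := id)
    (measurable_quantile.comp hcdf).aemeasurable aemeasurable_id
    (hmem.mono fun x hx => (quantile_le_iff hx x).2 le_rfl) ?_
  rw [← Measure.map_map measurable_quantile hcdf, map_cdf_eq_volume hμ, map_quantile_volume,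
    Measure.map_id]

theorem exists_map_eq_and_ae_le_of_cdf_le [IsProbabilityMeasure μ] [IsProbabilityMeasure ν]
    (hμ : Continuous (cdf μ)) (h : ∀ x, cdf ν x ≤ cdf μ x) :
    ∃ T : ℝ → ℝ, Measurable T ∧ μ.map T = ν ∧ ∀ᵐ x ∂μ, x ≤ T x := by
  have hcdf : Measurable (cdf μ) := (monotone_cdf μ).measurable
  refine ⟨quantile ν ∘ cdf μ, measurable_quantile.comp hcdf, ?_, ?_⟩
  · rw [← Measure.map_map measurable_quantile hcdf, map_cdf_eq_volume hμ, map_quantile_volume]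
  · exact (ae_quantile_cdf_eq hμ).mono fun x hx =>
      hx.symm.trans_le (quantile_le_quantile_of_cdf_le h _)

end ProbabilityTheory

lemma Real.log_one_add_mul_le_log_one_add_mul {a x y : ℝ} (ha : 0 ≤ a) (hx : 0 ≤ x)
    (hxy : x ≤ y) : Real.log (1 + a * x) ≤ Real.log (1 + a * y) :=
  Real.log_le_log (by positivity) (by gcongr)

theorem stochDom_coupling_upper_bound_zero_general
    {Ω Ω' : Type*} [MeasurableSpace Ω] [MeasurableSpace Ω']
    (μ : Measure Ω) (ν : Measure Ω') [IsProbabilityMeasure μ] [IsProbabilityMeasure ν]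
    (Hm Hz : Ω → ℝ) (He : Ω' → ℝ)
    (hHm : Measurable Hm) (hHz : Measurable Hz) (hHe : Measurable He)
    (hm0 : ∀ ω, 0 ≤ Hm ω) (hz0 : ∀ ω, 0 ≤ Hz ω)
    (Pt Pj : ℝ) (hPt : 0 ≤ Pt) (hPj : 0 ≤ Pj)
    (Fstar Fe : ℝ → ℝ)
    (hFstar : ∀ a, Fstar a = (μ {ω | Hm ω / (1 + Pj * Hz ω) ≤ a}).toReal)
    (hFe : ∀ a, Fe a = (ν {ω' | He ω' ≤ a}).toReal)
    (hFstarc : Continuous Fstar)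
    (hdom : ∀ a, Fe a ≤ Fstar a) :
    ∃ (Ω'' : Type) (m : MeasurableSpace Ω'') (ρ : Measure Ω''),
      IsProbabilityMeasure ρ ∧
      ∃ Hm' He' Hz' : Ω'' → ℝ,
        Measurable Hm' ∧ Measurable He' ∧ Measurable Hz' ∧
        ρ.map (fun ω => (Hm' ω, Hz' ω)) = μ.map (fun ω => (Hm ω, Hz ω)) ∧
        ρ.map He' = ν.map He ∧
        ∫ ω, max (Real.log (1 + Pt * Hm' ω / (1 + Pj * Hz' ω))
                  - Real.log (1 + Pt * He' ω)) 0 ∂ρ = 0 := by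
  set ρ := μ.map fun ω => (Hm ω, Hz ω)
  have hpair : Measurable fun ω => (Hm ω, Hz ω) := hHm.prodMk hHz
  have : IsProbabilityMeasure ρ := Measure.isProbabilityMeasure_map hpair.aemeasurable
  set Hstar : ℝ × ℝ → ℝ := fun p => p.1 / (1 + Pj * p.2)
  have hHstar : Measurable Hstar := by fun_prop
  have : IsProbabilityMeasure (ρ.map Hstar) :=
    Measure.isProbabilityMeasure_map hHstar.aemeasurable
  have : IsProbabilityMeasure (ν.map He) := Measure.isProbabilityMeasure_map hHe.aemeasurable
  have hcdf_star : ⇑(cdf (ρ.map Hstar)) = Fstar := funext fun a => by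
    rw [cdf_eq_real, Measure.map_map hHstar hpair, map_measureReal_apply (hHstar.comp hpair)
      measurableSet_Iic, hFstar, measureReal_def]
    rfl
  have hcdf_e : ⇑(cdf (ν.map He)) = Fe := funext fun a => by
    rw [cdf_eq_real, map_measureReal_apply hHe measurableSet_Iic, hFe, measureReal_def]
    rfl
  obtain ⟨T, hT, hTmap, hTle⟩ := exists_map_eq_and_ae_le_of_cdf_le (ν := ν.map He)
    (hcdf_star ▸ hFstarc) (by simpa only [hcdf_star, hcdf_e] using hdom)
  have hHstar_nonneg : ∀ᵐ p ∂ρ, 0 ≤ Hstar p :=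
    (ae_map_iff hpair.aemeasurable (measurableSet_le measurable_const hHstar)).2 <|
      ae_of_all _ fun ω => div_nonneg (hm0 ω) (add_nonneg zero_le_one (mul_nonneg hPj (hz0 ω)))
  refine ⟨ℝ × ℝ, inferInstance, ρ, inferInstance, Prod.fst, T ∘ Hstar, Prod.snd,
    measurable_fst, hT.comp hHstar, measurable_snd, Measure.map_id,
    by rw [← Measure.map_map hT hHstar, hTmap], ?_⟩
  refine integral_eq_zero_of_ae ?_
  filter_upwards [hHstar_nonneg, ae_of_ae_map hHstar.aemeasurable hTle] with p hp hpT
  rw [Function.comp_apply, mul_div_assoc, Pi.zero_apply]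
  exact max_eq_right (sub_nonpos.2 (Real.log_one_add_mul_le_log_one_add_mul hPt hp hpT))

/-- Remark 1 of the paper: if the eavesdropper gain `H_e` stochastically dominates the
effective main channel gain `H* = H_m / (1 + P_j H_z)` (both with continuous cdfs), then
there is a coupling `(H̃_m, H̃_e, H̃_z)` with `(H̃_m, H̃_z) ~ (H_m, H_z)` and `H̃_e ~ H_e`
for which the secrecy-capacity upper bound
`E[(ln(1 + P_t H̃_m/(1 + P_j H̃_z)) − ln(1 + P_t H̃_e))⁺]` is zero. -/
theorem stochDom_coupling_upper_bound_zero
    {Ω Ω' : Type*} [MeasurableSpace Ω] [MeasurableSpace Ω']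
    (μ : Measure Ω) (ν : Measure Ω') [IsProbabilityMeasure μ] [IsProbabilityMeasure ν]
    (Hm Hz : Ω → ℝ) (He : Ω' → ℝ)
    (hHm : Measurable Hm) (hHz : Measurable Hz) (hHe : Measurable He)
    (hm0 : ∀ ω, 0 ≤ Hm ω) (hz0 : ∀ ω, 0 ≤ Hz ω) (he0 : ∀ ω', 0 ≤ He ω')
    (Pt Pj : ℝ) (hPt : 0 ≤ Pt) (hPj : 0 ≤ Pj)
    (Fstar Fe : ℝ → ℝ)
    (hFstar : ∀ a, Fstar a = (μ {ω | Hm ω / (1 + Pj * Hz ω) ≤ a}).toReal)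
    (hFe : ∀ a, Fe a = (ν {ω' | He ω' ≤ a}).toReal)
    (hFstarc : Continuous Fstar) (hFec : Continuous Fe)
    (hdom : ∀ a, Fe a ≤ Fstar a) :
    ∃ (Ω'' : Type) (m : MeasurableSpace Ω'') (ρ : Measure Ω''),
      IsProbabilityMeasure ρ ∧
      ∃ Hm' He' Hz' : Ω'' → ℝ,
        Measurable Hm' ∧ Measurable He' ∧ Measurable Hz' ∧
        ρ.map (fun ω => (Hm' ω, Hz' ω)) = μ.map (fun ω => (Hm ω, Hz ω)) ∧
        ρ.map He' = ν.map He ∧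
        ∫ ω, max (Real.log (1 + Pt * Hm' ω / (1 + Pj * Hz' ω))
                  - Real.log (1 + Pt * He' ω)) 0 ∂ρ = 0 :=
  stochDom_coupling_upper_bound_zero_general μ ν Hm Hz He hHm hHz hHe hm0 hz0 Pt Pj hPt hPj Fstar Fe
    hFstar hFe hFstarc hdom
end

section
/- Let P_t, P_j : (0,∞) → (0,∞) be continuous functions with lim_{P→∞} P_t(P) = ∞, lim_{P→∞} P_j(P) = ∞, and suppose there exist constants B < ∞ and p_0 such that P_t(P) ≤ B·P_j(P) for all P > p_0. Let (H_m, H_e, H_z) be nonnegative random variables with E[H_m] < ∞ and E[H_z] < ∞, with H_e > 0 almost surely and H_z > 0 almost surely, and with H_z having a Lebesgue density bounded above by a constant A < ∞. Then lim_{P→∞} E[ max( ln(1 + P_t(P)·H_m/(1 + P_j(P)·H_z)) − ln(1 + P_t(P)·H_e), 0 ) ] = 0. -/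
open MeasureTheory Filter Set
open scoped ENNReal
open Real

/-! For large `P`, `P_t ≤ B P_j` gives `P_t H_m / (1 + P_j H_z) ≤ B H_m / H_z`, so the integrand is
dominated by `log 2 + log⁺ (B H_m) + log⁺ H_z⁻¹`. This is integrable: `log⁺ (B H_m) ≤ B H_m`, and
`log⁺ x⁻¹` is Lebesgue integrable, hence integrable against the bounded density of `H_z`. Pointwise
the integrand vanishes as soon as `log (1 + P_t H_e) ≥ log (1 + B H_m / H_z)`, so dominated
convergence finishes the proof. -/

lemma log_one_add_le_log_two_add_posLog {x : ℝ} (hx : 0 ≤ x) :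
    log (1 + x) ≤ log 2 + log⁺ x := by
  calc log (1 + x) = log⁺ (1 + x) := (posLog_eq_log (by rw [abs_of_nonneg] <;> linarith)).symm
    _ ≤ log 2 + log⁺ 1 + log⁺ x := posLog_add
    _ = log 2 + log⁺ x := by rw [posLog_one, add_zero]

lemma Real.posLog_le_self {x : ℝ} (hx : 0 ≤ x) : log⁺ x ≤ x :=
  max_le hx (log_le_self hx)

lemma log_one_add_div_le {a z : ℝ} (ha : 0 ≤ a) (hz : 0 ≤ z) :
    log (1 + a / z) ≤ log 2 + log⁺ a + log⁺ z⁻¹ := by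
  calc log (1 + a / z) ≤ log 2 + log⁺ (a * z⁻¹) :=
        log_one_add_le_log_two_add_posLog (div_nonneg ha hz)
    _ ≤ log 2 + (log⁺ a + log⁺ z⁻¹) := by gcongr; exact posLog_mul
    _ = log 2 + log⁺ a + log⁺ z⁻¹ := by ring

lemma mul_div_one_add_mul_le {t j B m z : ℝ} (hj : 0 ≤ j) (htj : t ≤ B * j) (hB : 0 ≤ B)
    (hm : 0 ≤ m) (hz : 0 < z) : t * m / (1 + j * z) ≤ B * m / z := by
  rw [div_le_div_iff₀ (by positivity) hz]
  nlinarith [mul_le_mul_of_nonneg_right htj (mul_nonneg hm hz.le), mul_nonneg hB hm]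

lemma log_one_add_mul_div_le {t j B m z : ℝ} (ht : 0 ≤ t) (hj : 0 ≤ j) (htj : t ≤ B * j)
    (hB : 0 ≤ B) (hm : 0 ≤ m) (hz : 0 < z) :
    log (1 + t * m / (1 + j * z)) ≤ log (1 + B * m / z) :=
  log_le_log (by positivity) (by linarith [mul_div_one_add_mul_le hj htj hB hm hz])

lemma integrable_posLog_inv : Integrable (fun x : ℝ => log⁺ x⁻¹) := by
  have hlog : IntegrableOn log (Icc (-1) 1) :=
    (intervalIntegrable_iff_integrableOn_Icc_of_le (by norm_num)).mp
      intervalIntegral.intervalIntegrable_log'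
  have hon : IntegrableOn (fun x : ℝ => log⁺ x⁻¹) (Icc (-1) 1) := by
    refine hlog.norm.mono' (continuous_posLog.measurable.comp measurable_inv).aestronglyMeasurable
      (ae_of_all _ fun x => ?_)
    rw [Real.norm_eq_abs, Real.norm_eq_abs, abs_of_nonneg posLog_nonneg, posLog_apply, log_inv]
    exact max_le (abs_nonneg _) (neg_le_abs _)
  refine hon.integrable_of_forall_notMem_eq_zero fun x hx => ?_
  rw [posLog_eq_zero_iff, abs_inv]
  exact inv_le_one_of_one_le₀ (by grind [le_abs])

lemma MeasureTheory.Integrable.comp_of_map_eq_withDensity_le {Ω α E : Type*} [MeasurableSpace Ω]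
    [MeasurableSpace α] [NormedAddCommGroup E] {μ : Measure Ω} {ν : Measure α} {X : Ω → α}
    {f : α → ℝ≥0∞} {c : ℝ≥0∞} {g : α → E} (hg : Integrable g ν) (hX : Measurable X)
    (hf : μ.map X = ν.withDensity f) (hfc : ∀ x, f x ≤ c) (hc : c ≠ ∞) :
    Integrable (fun ω => g (X ω)) μ := by
  have hle : ν.withDensity f ≤ c • ν :=
    withDensity_const (μ := ν) c ▸ withDensity_mono (ae_of_all _ hfc)
  have hmap : Integrable g (μ.map X) := hf ▸ (hg.smul_measure hc).mono_measure hle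
  exact (integrable_map_measure hmap.aestronglyMeasurable hX.aemeasurable).mp hmap

lemma max_log_sub_log_le {t j B m z e : ℝ} (ht : 0 ≤ t) (hj : 0 ≤ j) (htj : t ≤ B * j)
    (hB : 0 ≤ B) (hm : 0 ≤ m) (hz : 0 < z) (he : 0 ≤ e) :
    max (log (1 + t * m / (1 + j * z)) - log (1 + t * e)) 0 ≤ log 2 + log⁺ (B * m) + log⁺ z⁻¹ := by
  have hlog_e : 0 ≤ log (1 + t * e) := log_nonneg (by nlinarith)
  have hbound := (log_one_add_mul_div_le ht hj htj hB hm hz).trans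
    (log_one_add_div_le (mul_nonneg hB hm) hz.le)
  have := add_nonneg (add_nonneg (log_nonneg one_le_two) (posLog_nonneg (x := B * m)))
    (posLog_nonneg (x := z⁻¹))
  exact max_le (by linarith) this

lemma tendsto_max_log_sub_log_zero {Pt Pj : ℝ → ℝ} {B m z e : ℝ}
    (hPt : Tendsto Pt atTop atTop) (hPow : ∀ᶠ P in atTop, 0 ≤ Pt P ∧ 0 ≤ Pj P ∧ Pt P ≤ B * Pj P)
    (hB : 0 ≤ B) (hm : 0 ≤ m) (hz : 0 < z) (he : 0 < e) :
    Tendsto (fun P => max (log (1 + Pt P * m / (1 + Pj P * z)) - log (1 + Pt P * e)) 0)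
      atTop (nhds 0) := by
  have hlog_e : Tendsto (fun P => log (1 + Pt P * e)) atTop atTop :=
    tendsto_log_atTop.comp (tendsto_atTop_add_const_left _ _ (hPt.atTop_mul_const he))
  refine tendsto_const_nhds.congr' ?_
  filter_upwards [hPow, hlog_e.eventually_gt_atTop (log (1 + B * m / z))]
    with P ⟨ht, hj, htj⟩ hlt
  exact (max_eq_right (by linarith [log_one_add_mul_div_le ht hj htj hB hm hz])).symm

theorem secrecy_upper_bound_tendsto_zero_general
    {Ω : Type*} [MeasurableSpace Ω] (μ : Measure Ω) [IsProbabilityMeasure μ]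
    (Pt Pj : ℝ → ℝ)
    (hPttop : Tendsto Pt atTop atTop) (hPjtop : Tendsto Pj atTop atTop)
    (B p0 : ℝ) (hB : ∀ P > p0, Pt P ≤ B * Pj P)
    (Hm He Hz : Ω → ℝ)
    (hHm : Measurable Hm) (hHe : Measurable He) (hHz : Measurable Hz)
    (hm0 : ∀ ω, 0 ≤ Hm ω)
    (hHmInt : Integrable Hm μ)
    (hepos : ∀ᵐ ω ∂μ, 0 < He ω) (hzpos : ∀ᵐ ω ∂μ, 0 < Hz ω)
    (A : ℝ) (f : ℝ → ℝ≥0∞)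
    (hf : μ.map Hz = volume.withDensity f)
    (hfA : ∀ x, f x ≤ ENNReal.ofReal A) :
    Tendsto
      (fun P => ∫ ω, max (Real.log (1 + Pt P * Hm ω / (1 + Pj P * Hz ω))
                          - Real.log (1 + Pt P * He ω)) 0 ∂μ)
      atTop (nhds 0) := by
  have hPow : ∀ᶠ P in atTop, 0 < Pt P ∧ 0 < Pj P ∧ Pt P ≤ B * Pj P :=
    (hPttop.eventually_gt_atTop 0).and
      ((hPjtop.eventually_gt_atTop 0).and ((eventually_gt_atTop p0).mono hB))
  have hB0 : 0 ≤ B := by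
    obtain ⟨P, ht, hj, htj⟩ := hPow.exists
    exact (pos_of_mul_pos_left (ht.trans_le htj) hj.le).le
  have hPow' : ∀ᶠ P in atTop, 0 ≤ Pt P ∧ 0 ≤ Pj P ∧ Pt P ≤ B * Pj P :=
    hPow.mono fun P ⟨ht, hj, htj⟩ => ⟨ht.le, hj.le, htj⟩
  have hbound : Integrable (fun ω => log 2 + log⁺ (B * Hm ω) + log⁺ (Hz ω)⁻¹) μ := by
    refine ((integrable_const _).add ((hHmInt.const_mul B).mono' ?_ ?_)).add
      (integrable_posLog_inv.comp_of_map_eq_withDensity_le (g := fun x => log⁺ x⁻¹) hHz hf hfA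
        ENNReal.ofReal_ne_top)
    · exact (continuous_posLog.measurable.comp (hHm.const_mul B)).aestronglyMeasurable
    · refine ae_of_all _ fun ω => ?_
      rw [Real.norm_of_nonneg posLog_nonneg]
      exact posLog_le_self (mul_nonneg hB0 (hm0 ω))
  simpa using tendsto_integral_filter_of_dominated_convergence (f := fun _ => (0 : ℝ)) _
    (Eventually.of_forall fun P => by fun_prop)
    (hPow'.mono fun P ⟨ht, hj, htj⟩ => by
      filter_upwards [hepos, hzpos] with ω he hz
      rw [Real.norm_of_nonneg (le_max_right _ _)]
      exact max_log_sub_log_le ht hj htj hB0 (hm0 ω) hz he.le)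
    hbound
    (by
      filter_upwards [hepos, hzpos] with ω he hz
      exact tendsto_max_log_sub_log_zero hPttop hPow' hB0 (hm0 ω) hz he)

/-- Corollary 1 of the paper: if the transmit power `P_t(P)` and jamming power `P_j(P)`
are continuous on `(0,∞)`, tend to infinity, and `P_t(P) ≤ B · P_j(P)` for `P > p_0`,
and the channel gains satisfy `E[H_m] < ∞`, `E[H_z] < ∞`, `H_e > 0` a.s., `H_z > 0` a.s.,
with `H_z` having a Lebesgue density bounded by `A`, then the secrecy-capacity upper bound
`E[(ln(1 + P_t(P) H_m/(1 + P_j(P) H_z)) − ln(1 + P_t(P) H_e))⁺]` tends to `0` as `P → ∞`. -/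
theorem secrecy_upper_bound_tendsto_zero
    {Ω : Type*} [MeasurableSpace Ω] (μ : Measure Ω) [IsProbabilityMeasure μ]
    (Pt Pj : ℝ → ℝ)
    (hPtc : ContinuousOn Pt (Ioi 0)) (hPjc : ContinuousOn Pj (Ioi 0))
    (hPtpos : ∀ P > (0 : ℝ), 0 < Pt P) (hPjpos : ∀ P > (0 : ℝ), 0 < Pj P)
    (hPttop : Tendsto Pt atTop atTop) (hPjtop : Tendsto Pj atTop atTop)
    (B p0 : ℝ) (hB : ∀ P > p0, Pt P ≤ B * Pj P)
    (Hm He Hz : Ω → ℝ)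
    (hHm : Measurable Hm) (hHe : Measurable He) (hHz : Measurable Hz)
    (hm0 : ∀ ω, 0 ≤ Hm ω) (he0 : ∀ ω, 0 ≤ He ω) (hz0 : ∀ ω, 0 ≤ Hz ω)
    (hHmInt : Integrable Hm μ) (hHzInt : Integrable Hz μ)
    (hepos : ∀ᵐ ω ∂μ, 0 < He ω) (hzpos : ∀ᵐ ω ∂μ, 0 < Hz ω)
    (A : ℝ) (f : ℝ → ℝ≥0∞)
    (hf : μ.map Hz = volume.withDensity f)
    (hfA : ∀ x, f x ≤ ENNReal.ofReal A) :
    Tendsto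
      (fun P => ∫ ω, max (Real.log (1 + Pt P * Hm ω / (1 + Pj P * Hz ω))
                          - Real.log (1 + Pt P * He ω)) 0 ∂μ)
      atTop (nhds 0) :=
  secrecy_upper_bound_tendsto_zero_general μ Pt Pj hPttop hPjtop B p0 hB Hm He Hz hHm hHe hHz hm0
    hHmInt hepos hzpos A f hf hfA
end

section
/- Let H_m and H_z be nonnegative random variables on a common probability space with E[H_m] < ∞ and 0 < E[H_z] < ∞, such that H_z > 0 almost surely and the law of H_z has a Lebesgue density bounded above by a constant A < ∞. Then for every constant B > 0, E[ ln(1 + B·H_m/H_z) ] ≤ ln( B·E[H_m] + E[H_z] ) + A; in particular E[ ln(1 + B·H_m/H_z) ] < ∞. -/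
/-!
Write `log (1 + B Hm / Hz) = log (Hz + B Hm) - log Hz`. The tangent line of `log` at the mean
bounds the expectation of the first term by `log E[Hz + B Hm]` (Jensen). For the second, the
density bound gives `E[(-log Hz)⁺] ≤ A ∫₀¹ (-log x) dx = A`; together with `log x ≤ x` this also
makes both logarithms integrable.
-/

open MeasureTheory Set Real
open scoped ENNReal

theorem lintegral_comp_le_mul_lintegral_of_map_eq_withDensity {α β : Type*} [MeasurableSpace α]
    [MeasurableSpace β] {μ : Measure α} {ν : Measure β} {X : α → β} (hX : AEMeasurable X μ)
    {f : β → ℝ≥0∞} (hf : μ.map X = ν.withDensity f) {C : ℝ≥0∞} (hfC : ∀ᵐ x ∂ν, f x ≤ C)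
    {g : β → ℝ≥0∞} (hg : Measurable g) :
    ∫⁻ a, g (X a) ∂μ ≤ C * ∫⁻ x, g x ∂ν :=
  calc ∫⁻ a, g (X a) ∂μ = ∫⁻ x, g x ∂ν.withDensity f := by
        rw [← hf, lintegral_map' hg.aemeasurable hX]
    _ ≤ ∫⁻ x, g x ∂ν.withDensity fun _ ↦ C := lintegral_mono' (withDensity_mono hfC) le_rfl
    _ = C * ∫⁻ x, g x ∂ν := by rw [withDensity_const, lintegral_smul_measure, smul_eq_mul]

theorem lintegral_Ioc_zero_one_ofReal_neg_log :
    ∫⁻ x in Ioc (0 : ℝ) 1, ENNReal.ofReal (-log x) = 1 := by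
  have hint : IntegrableOn (fun x ↦ -log x) (Ioc (0 : ℝ) 1) :=
    intervalIntegral.intervalIntegrable_log'.neg.1
  rw [← ofReal_integral_eq_lintegral_ofReal hint, ← intervalIntegral.integral_of_le zero_le_one,
    intervalIntegral.integral_neg, integral_log_from_zero]
  · simp
  · filter_upwards [ae_restrict_mem measurableSet_Ioc] with x hx
    simpa using log_nonpos hx.1.le hx.2

section

variable {α : Type*} [MeasurableSpace α] {μ : Measure α}

theorem lintegral_ofReal_neg_log_le_of_map_eq_withDensity {X : α → ℝ} (hX : AEMeasurable X μ)
    (hpos : ∀ᵐ a ∂μ, 0 < X a) {f : ℝ → ℝ≥0∞} (hf : μ.map X = volume.withDensity f) {C : ℝ≥0∞}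
    (hfC : ∀ᵐ x, f x ≤ C) :
    ∫⁻ a, ENNReal.ofReal (-log (X a)) ∂μ ≤ C := by
  set φ : ℝ → ℝ≥0∞ := (Ioc 0 1).indicator fun x ↦ ENNReal.ofReal (-log x)
  have hφ : ∀ x, 0 < x → ENNReal.ofReal (-log x) = φ x := by
    intro x hx
    simp only [φ, indicator_apply, mem_Ioc, hx, true_and]
    split_ifs with hx1
    · rfl
    · rw [ENNReal.ofReal_eq_zero]
      linarith [log_pos (not_le.1 hx1)]
  calc ∫⁻ a, ENNReal.ofReal (-log (X a)) ∂μ = ∫⁻ a, φ (X a) ∂μ :=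
        lintegral_congr_ae (hpos.mono fun a ha ↦ hφ _ ha)
    _ ≤ C * ∫⁻ x, φ x := lintegral_comp_le_mul_lintegral_of_map_eq_withDensity hX hf hfC
        (measurable_log.neg.ennreal_ofReal.indicator measurableSet_Ioc)
    _ = C := by
        rw [lintegral_indicator measurableSet_Ioc, lintegral_Ioc_zero_one_ofReal_neg_log, mul_one]

theorem integrable_log_of_neg_log_le {X g : α → ℝ} (hX : Integrable X μ) (hpos : ∀ᵐ a ∂μ, 0 < X a)
    (hg : Integrable g μ) (hle : ∀ᵐ a ∂μ, -log (X a) ≤ g a) :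
    Integrable (fun a ↦ log (X a)) μ := by
  refine (hX.add hg.abs).mono'
    (measurable_log.comp_aemeasurable hX.aemeasurable).aestronglyMeasurable ?_
  filter_upwards [hpos, hle] with a hXa hga
  rw [Pi.add_apply, norm_eq_abs, abs_le]
  constructor <;> linarith [log_le_self hXa.le, le_abs_self (g a), abs_nonneg (g a)]

theorem integral_log_le_log_integral [IsProbabilityMeasure μ] {X : α → ℝ} (hX : Integrable X μ)
    (hpos : ∀ᵐ a ∂μ, 0 < X a) (hlog : Integrable (fun a ↦ log (X a)) μ) :
    ∫ a, log (X a) ∂μ ≤ log (∫ a, X a ∂μ) := by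
  set c := ∫ a, X a ∂μ
  have hc : 0 < c := by
    rw [integral_pos_iff_support_of_nonneg_ae (hpos.mono fun _ h ↦ h.le) hX, pos_iff_ne_zero]
    intro h0
    obtain ⟨a, hnot, hXa⟩ := ((measure_eq_zero_iff_ae_notMem.1 h0).and hpos).exists
    exact hnot (Function.mem_support.2 hXa.ne')
  have htangent : ∀ x, 0 < x → log x ≤ x / c + (log c - 1) := fun x hx ↦ by
    have := log_le_sub_one_of_pos (div_pos hx hc)
    rw [log_div hx.ne' hc.ne'] at this
    linarith
  calc ∫ a, log (X a) ∂μ ≤ ∫ a, (X a / c + (log c - 1)) ∂μ :=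
        integral_mono_ae hlog ((hX.div_const c).add (integrable_const _))
          (hpos.mono fun a ha ↦ htangent _ ha)
    _ = log c := by
        rw [integral_add (hX.div_const c) (integrable_const _), integral_div, integral_const,
          div_self hc.ne']
        simp

section LogOneAddDiv

variable {Y Z : α → ℝ}

theorem log_one_add_div_ae_eq (hY0 : ∀ᵐ a ∂μ, 0 ≤ Y a) (hZpos : ∀ᵐ a ∂μ, 0 < Z a) :
    (fun a ↦ log (1 + Y a / Z a)) =ᵐ[μ] fun a ↦ log (Y a + Z a) - log (Z a) := by
  filter_upwards [hY0, hZpos] with a hYa hZa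
  rw [← log_div (by positivity) hZa.ne', add_div, div_self hZa.ne', add_comm]

theorem integrable_log_add (hY : Integrable Y μ) (hY0 : ∀ᵐ a ∂μ, 0 ≤ Y a) (hZ : Integrable Z μ)
    (hZpos : ∀ᵐ a ∂μ, 0 < Z a) (hlogZ : Integrable (fun a ↦ log (Z a)) μ) :
    Integrable (fun a ↦ log (Y a + Z a)) μ :=
  integrable_log_of_neg_log_le (hY.add hZ) (by filter_upwards [hY0, hZpos] with a _ _; positivity)
    hlogZ.neg (by
      filter_upwards [hY0, hZpos] with a hYa hZa
      exact neg_le_neg (log_le_log hZa (by linarith)))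

theorem integrable_log_one_add_div (hY : Integrable Y μ) (hY0 : ∀ᵐ a ∂μ, 0 ≤ Y a)
    (hZ : Integrable Z μ) (hZpos : ∀ᵐ a ∂μ, 0 < Z a) (hlogZ : Integrable (fun a ↦ log (Z a)) μ) :
    Integrable (fun a ↦ log (1 + Y a / Z a)) μ :=
  ((integrable_log_add hY hY0 hZ hZpos hlogZ).sub hlogZ).congr
    (log_one_add_div_ae_eq hY0 hZpos).symm

theorem integral_log_one_add_div_le [IsProbabilityMeasure μ] (hY : Integrable Y μ)
    (hY0 : ∀ᵐ a ∂μ, 0 ≤ Y a) (hZ : Integrable Z μ) (hZpos : ∀ᵐ a ∂μ, 0 < Z a)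
    (hlogZ : Integrable (fun a ↦ log (Z a)) μ) :
    ∫ a, log (1 + Y a / Z a) ∂μ ≤ log (∫ a, Y a ∂μ + ∫ a, Z a ∂μ) - ∫ a, log (Z a) ∂μ := by
  have hlogYZ := integrable_log_add hY hY0 hZ hZpos hlogZ
  rw [integral_congr_ae (log_one_add_div_ae_eq hY0 hZpos), integral_sub hlogYZ hlogZ,
    ← integral_add hY hZ]
  gcongr
  exact integral_log_le_log_integral (hY.add hZ)
    (by filter_upwards [hY0, hZpos] with a _ _; positivity) hlogYZ

end LogOneAddDiv

section BoundedDensity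

variable {Z : α → ℝ} {f : ℝ → ℝ≥0∞}

theorem integrable_log_of_map_eq_withDensity (hZ : Integrable Z μ) (hZpos : ∀ᵐ a ∂μ, 0 < Z a)
    (hf : μ.map Z = volume.withDensity f) {C : ℝ≥0∞} (hfC : ∀ᵐ x, f x ≤ C) (hC : C ≠ ∞) :
    Integrable (fun a ↦ log (Z a)) μ := by
  have hneg := lintegral_ofReal_neg_log_le_of_map_eq_withDensity hZ.aemeasurable hZpos hf hfC
  refine integrable_log_of_neg_log_le hZ hZpos (g := fun a ↦ max (-log (Z a)) 0) ⟨?_, ?_⟩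
    (ae_of_all _ fun a ↦ le_max_left _ _)
  · exact (measurable_log.comp_aemeasurable hZ.aemeasurable).neg.max
      aemeasurable_const |>.aestronglyMeasurable
  · rw [hasFiniteIntegral_iff_ofReal (f := fun a ↦ max (-log (Z a)) 0)
      (ae_of_all _ fun a ↦ le_max_right _ _)]
    simp only [ENNReal.ofReal_max, ENNReal.ofReal_zero, zero_le, sup_of_le_left]
    exact hneg.trans_lt hC.lt_top

theorem neg_integral_log_le_of_map_eq_withDensity [IsProbabilityMeasure μ]
    (hZ : Integrable Z μ) (hZpos : ∀ᵐ a ∂μ, 0 < Z a) (hf : μ.map Z = volume.withDensity f) {A : ℝ}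
    (hfA : ∀ᵐ x, f x ≤ ENNReal.ofReal A) :
    -∫ a, log (Z a) ∂μ ≤ A := by
  have hA : 0 ≤ A := by
    by_contra! hA
    -- `1 = μ univ ≤ ofReal A * volume univ = 0`
    have := lintegral_comp_le_mul_lintegral_of_map_eq_withDensity hZ.aemeasurable hf hfA
      (measurable_const (a := (1 : ℝ≥0∞)))
    simp [ENNReal.ofReal_of_nonpos hA.le] at this
  have hneg := lintegral_ofReal_neg_log_le_of_map_eq_withDensity hZ.aemeasurable hZpos hf hfA
  rw [integral_eq_lintegral_pos_part_sub_lintegral_neg_part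
    (integrable_log_of_map_eq_withDensity hZ hZpos hf hfA ENNReal.ofReal_ne_top)]
  linarith [ENNReal.toReal_le_of_le_ofReal hA hneg,
    ENNReal.toReal_nonneg (a := ∫⁻ a, ENNReal.ofReal (log (Z a)) ∂μ)]

end BoundedDensity

end

theorem dominating_function_integrable_general
    {Ω : Type*} [MeasurableSpace Ω] (μ : Measure Ω) [IsProbabilityMeasure μ]
    (Hm Hz : Ω → ℝ)
    (hm0 : ∀ ω, 0 ≤ Hm ω)
    (hHmInt : Integrable Hm μ) (hHzInt : Integrable Hz μ)
    (hzpos : ∀ᵐ ω ∂μ, 0 < Hz ω)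
    (A : ℝ) (f : ℝ → ℝ≥0∞)
    (hf : μ.map Hz = volume.withDensity f)
    (hfA : ∀ x, f x ≤ ENNReal.ofReal A)
    (B : ℝ) (hB : 0 < B) :
    Integrable (fun ω => Real.log (1 + B * Hm ω / Hz ω)) μ ∧
    ∫ ω, Real.log (1 + B * Hm ω / Hz ω) ∂μ
      ≤ Real.log (B * (∫ ω, Hm ω ∂μ) + ∫ ω, Hz ω ∂μ) + A := by
  have hBHm : Integrable (fun ω ↦ B * Hm ω) μ := hHmInt.const_mul B
  have hBHm0 : ∀ᵐ ω ∂μ, 0 ≤ B * Hm ω := ae_of_all _ fun ω ↦ mul_nonneg hB.le (hm0 ω)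
  have hlogHz := integrable_log_of_map_eq_withDensity hHzInt hzpos hf (ae_of_all _ hfA)
    ENNReal.ofReal_ne_top
  refine ⟨integrable_log_one_add_div hBHm hBHm0 hHzInt hzpos hlogHz, ?_⟩
  have hlog := integral_log_one_add_div_le hBHm hBHm0 hHzInt hzpos hlogHz
  have hneg := neg_integral_log_le_of_map_eq_withDensity hHzInt hzpos hf (ae_of_all _ hfA)
  rw [integral_const_mul] at hlog
  linarith

/-- The integrability estimate of Appendix B of the paper: if `H_m, H_z ≥ 0` with
`E[H_m] < ∞`, `0 < E[H_z] < ∞`, `H_z > 0` a.s. and the law of `H_z` has a Lebesgue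
density bounded by `A`, then for every `B > 0`,
`E[ln(1 + B·H_m/H_z)] ≤ ln(B·E[H_m] + E[H_z]) + A`; in particular the expectation
is finite. -/
theorem dominating_function_integrable
    {Ω : Type*} [MeasurableSpace Ω] (μ : Measure Ω) [IsProbabilityMeasure μ]
    (Hm Hz : Ω → ℝ) (hHm : Measurable Hm) (hHz : Measurable Hz)
    (hm0 : ∀ ω, 0 ≤ Hm ω) (hz0 : ∀ ω, 0 ≤ Hz ω)
    (hHmInt : Integrable Hm μ) (hHzInt : Integrable Hz μ)
    (hEz : 0 < ∫ ω, Hz ω ∂μ)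
    (hzpos : ∀ᵐ ω ∂μ, 0 < Hz ω)
    (A : ℝ) (f : ℝ → ℝ≥0∞)
    (hf : μ.map Hz = volume.withDensity f)
    (hfA : ∀ x, f x ≤ ENNReal.ofReal A)
    (B : ℝ) (hB : 0 < B) :
    Integrable (fun ω => Real.log (1 + B * Hm ω / Hz ω)) μ ∧
    ∫ ω, Real.log (1 + B * Hm ω / Hz ω) ∂μ
      ≤ Real.log (B * (∫ ω, Hm ω ∂μ) + ∫ ω, Hz ω ∂μ) + A :=
  dominating_function_integrable_general μ Hm Hz hm0 hHmInt hHzInt hzpos A f hf hfA B hB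
end

section
/- For any fixed real numbers x ≥ 0 and y ≥ 0, the function P ↦ max( ln(1 + P·x) − ln(1 + P·y), 0 ) is concave on [0, ∞). -/
/-!
The difference `log (1 + P x) - log (1 + P y)` has the sign of `x - y` on `[0, ∞)`, so its positive
part is either identically zero or the difference itself. In the latter case `y ≤ x`, and the
derivative `(x - y) / ((1 + P x) (1 + P y))` is antitone because its denominator increases with `P`.
-/

open Real Set

lemma hasDerivAt_log_one_add_mul (c : ℝ) {P : ℝ} (h : 1 + P * c ≠ 0) :
    HasDerivAt (fun P => log (1 + P * c)) (c / (1 + P * c)) P := by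
  simpa using (((hasDerivAt_id P).mul_const c).const_add 1).log h

lemma log_one_add_mul_le_log_one_add_mul {x y P : ℝ} (hyx : y ≤ x) (hP : 0 ≤ P)
    (h : 0 < 1 + P * y) : log (1 + P * y) ≤ log (1 + P * x) :=
  log_le_log h (by nlinarith)

lemma concaveOn_log_one_add_mul_sub_log_one_add_mul {x y : ℝ} (hy : 0 ≤ y) (hyx : y ≤ x) :
    ConcaveOn ℝ (Ici 0) (fun P => log (1 + P * x) - log (1 + P * y)) := by
  have hx : 0 ≤ x := hy.trans hyx
  have hderiv : ∀ P : ℝ, 0 ≤ P → HasDerivAt (fun P => log (1 + P * x) - log (1 + P * y))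
      ((x - y) / ((1 + P * x) * (1 + P * y))) P := by
    intro P hP
    have hPx : 0 < 1 + P * x := by positivity
    have hPy : 0 < 1 + P * y := by positivity
    refine ((hasDerivAt_log_one_add_mul x hPx.ne').sub
      (hasDerivAt_log_one_add_mul y hPy.ne')).congr_deriv ?_
    field_simp
    ring
  refine AntitoneOn.concaveOn_of_deriv (convex_Ici 0)
    (fun P hP => (hderiv P hP).continuousAt.continuousWithinAt) ?_ ?_ <;> rw [interior_Ici]
  · exact fun P (hP : 0 < P) => (hderiv P hP.le).differentiableAt.differentiableWithinAt
  · intro a (ha : 0 < a) b (hb : 0 < b) hab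
    rw [(hderiv a ha.le).deriv, (hderiv b hb.le).deriv]
    gcongr

/-- Step (f) of the upper bound proof of Theorem 1: for fixed `x, y ≥ 0`, the map
`P ↦ (ln(1 + P·x) − ln(1 + P·y))⁺` is concave on `[0, ∞)`. -/
theorem positive_part_log_diff_concaveOn
    (x y : ℝ) (hx : 0 ≤ x) (hy : 0 ≤ y) :
    ConcaveOn ℝ (Set.Ici 0)
      (fun P => max (Real.log (1 + P * x) - Real.log (1 + P * y)) 0) := by
  rcases le_total x y with hxy | hyx
  · refine (concaveOn_const 0 (convex_Ici 0)).congr fun P (hP : 0 ≤ P) => ?_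
    have h := log_one_add_mul_le_log_one_add_mul hxy hP (by positivity)
    simp only [max_eq_right (sub_nonpos.mpr h)]
  · refine (concaveOn_log_one_add_mul_sub_log_one_add_mul hy hyx).congr
      fun P (hP : 0 ≤ P) => ?_
    have h := log_one_add_mul_le_log_one_add_mul hyx hP (by positivity)
    simp only [max_eq_left (sub_nonneg.mpr h)]
end

section
/- For any fixed real numbers x ≥ 0 and y ≥ 0, the function P ↦ ln(1 + P·x/(1 + P·y)) is concave on [0, ∞). -/
/-! The derivative of `P ↦ log (1 + P x / (1 + P y))` is `x / ((1 + P y) (1 + P (x + y)))`: its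
numerator is a nonnegative constant and both factors of its denominator are positive and
nondecreasing in `P ≥ 0`, so it is antitone, and a function with antitone derivative is concave. -/

open Set

lemma hasDerivAt_log_one_add_mul_div_one_add_mul {x y P : ℝ} (hy : 1 + P * y ≠ 0)
    (hxy : 1 + P * (x + y) ≠ 0) :
    HasDerivAt (fun Q => Real.log (1 + Q * x / (1 + Q * y)))
      (x / ((1 + P * y) * (1 + P * (x + y)))) P := by
  have hden : HasDerivAt (fun Q => 1 + Q * y) y P := by
    simpa using ((hasDerivAt_id P).mul_const y).const_add 1
  have hinner : HasDerivAt (fun Q => 1 + Q * x / (1 + Q * y)) (x / (1 + P * y) ^ 2) P := by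
    have hquot : HasDerivAt (fun Q => 1 + Q * x / (1 + Q * y))
        ((1 * x * (1 + P * y) - P * x * y) / (1 + P * y) ^ 2) P :=
      (((hasDerivAt_id' P).mul_const x).div hden hy).const_add 1
    convert hquot using 2
    ring
  have hval : 1 + P * x / (1 + P * y) = (1 + P * (x + y)) / (1 + P * y) := by
    field_simp
    ring
  convert hinner.log (by rw [hval]; exact div_ne_zero hxy hy) using 1
  rw [hval]
  field_simp

lemma antitoneOn_div_mul_one_add_mul {x y : ℝ} (hx : 0 ≤ x) (hy : 0 ≤ y) :
    AntitoneOn (fun P => x / ((1 + P * y) * (1 + P * (x + y)))) (Ici 0) := by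
  intro P (hP : 0 ≤ P) Q (hQ : 0 ≤ Q) hPQ
  have hxy : 0 ≤ x + y := add_nonneg hx hy
  apply div_le_div_of_nonneg_left hx (by positivity)
  gcongr

/-- Step (b) of the upper bound proof of Theorem 2 (Appendix D): for fixed `x, y ≥ 0`,
the map `P ↦ ln(1 + P·x/(1 + P·y))` is concave on `[0, ∞)`. -/
theorem log_ratio_concaveOn
    (x y : ℝ) (hx : 0 ≤ x) (hy : 0 ≤ y) :
    ConcaveOn ℝ (Set.Ici 0)
      (fun P => Real.log (1 + P * x / (1 + P * y))) := by
  have hderiv : ∀ P ∈ Ici (0 : ℝ), HasDerivAt (fun Q => Real.log (1 + Q * x / (1 + Q * y)))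
      (x / ((1 + P * y) * (1 + P * (x + y)))) P := fun P (hP : 0 ≤ P) =>
    hasDerivAt_log_one_add_mul_div_one_add_mul (by positivity) (by positivity)
  refine AntitoneOn.concaveOn_of_deriv (convex_Ici 0)
    (fun P hP => (hderiv P hP).continuousAt.continuousWithinAt)
    (fun P hP => (hderiv P (interior_subset hP)).differentiableAt.differentiableWithinAt) ?_
  intro P hP Q hQ hPQ
  rw [(hderiv P (interior_subset hP)).deriv, (hderiv Q (interior_subset hQ)).deriv]
  exact antitoneOn_div_mul_one_add_mul hx hy (interior_subset hP) (interior_subset hQ) hPQ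
end

section
/- Let ((H_m(i), H_e(i), H_z(i)))_{i≥1} be an i.i.d. sequence of triples of nonnegative real random variables with H_e(1) < ∞ almost surely, and let P_t > 0, P_j ≥ 0 be constants with P(H_m(1)/(1 + P_j·H_z(1)) > 0) > 0. Then there exists R > 0 such that, with T := inf{ t ≥ 1 : Σ_{i=1}^t ln(1 + P_t·H_m(i)/(1 + P_j·H_z(i))) ≥ R }, one has E[T] < ∞ and E[ max( R − ln(1 + P_t·Σ_{i=1}^T H_e(i)), 0 ) ] > 0; consequently the ratio (1/E[T])·E[ max( R − ln(1 + P_t·Σ_{i=1}^T H_e(i)), 0 ) ] is strictly positive. -/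
open MeasureTheory ProbabilityTheory
open scoped ENNReal

/-!
Call index `i` a hit if its gain `L_i = ln(1 + P_t H_m(i)/(1 + P_j H_z(i)))` is at least some
`ε > 0`; by hypothesis hits have positive probability, and even hits with `H_e(i) ≤ c` do, for
suitable `ε, c`. Since `ln(1 + P_t k c)` grows sublinearly in `k`, some `k ≥ 1` satisfies
`ln(1 + P_t k c) < k ε`; take `R = k ε`.

If `T > n`, fewer than `k` of the first `n` indices are hits, so one of `k` disjoint blocks of
length `⌊n/k⌋` contains none; by independence `P(T > n) ≤ k ρ^⌊n/k⌋` with `ρ < 1`, and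
`E[T] = Σ P(T > n)` is finite. With positive probability the first `k` indices are all hits
with `H_e ≤ c`; then `1 ≤ T ≤ k`, `Σ_{i<T} H_e(i) ≤ k c`, and the reward is at least
`k ε - ln(1 + P_t k c) > 0`.
-/

open Filter Finset Real

theorem Finset.le_card_filter_range_mul {p : ℕ → Prop} [DecidablePred p] {k m : ℕ}
    (h : ∀ j < k, ∃ i ∈ Ico (j * m) (j * m + m), p i) :
    k ≤ #{i ∈ range (k * m) | p i} := by
  induction k with
  | zero => simp
  | succ k ih =>
    obtain ⟨i, hi, hpi⟩ := h k k.lt_succ_self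
    have hblock : 1 ≤ #{i ∈ Ico (k * m) (k * m + m) | p i} :=
      card_pos.2 ⟨i, mem_filter.2 ⟨hi, hpi⟩⟩
    rw [card_filter, ← sum_range_add_sum_Ico _ (by nlinarith : k * m ≤ (k + 1) * m),
      ← card_filter, ← card_filter, add_mul, one_mul]
    have := ih fun j hj => h j (hj.trans k.lt_succ_self)
    omega

theorem Finset.card_filter_mul_le_sum {ι R : Type*} [Semiring R] [PartialOrder R]
    [IsOrderedRing R] {s : Finset ι} {f : ι → R} (hf : ∀ i ∈ s, 0 ≤ f i) (ε : R)
    [DecidablePred (ε ≤ f ·)] :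
    #{i ∈ s | ε ≤ f i} * ε ≤ ∑ i ∈ s, f i :=
  calc #{i ∈ s | ε ≤ f i} * ε = ∑ i ∈ s with ε ≤ f i, ε := by simp
    _ ≤ ∑ i ∈ s with ε ≤ f i, f i := sum_le_sum fun i hi => (mem_filter.1 hi).2
    _ ≤ ∑ i ∈ s, f i :=
        sum_le_sum_of_subset_of_nonneg (filter_subset _ _) fun i hi _ => hf i hi

theorem ENNReal.tsum_pow_div (r : ℝ≥0∞) (k : ℕ) [NeZero k] :
    ∑' n, r ^ (n / k) = k * (1 - r)⁻¹ :=
  calc ∑' n, r ^ (n / k)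
      = ∑' p : ℕ × Fin k, r ^ p.1 := (Nat.divModEquiv k).tsum_eq (r ^ ·.1)
    _ = ∑' (a : ℕ) (_ : Fin k), r ^ a := ENNReal.tsum_prod'
    _ = k * (1 - r)⁻¹ := by simp [ENNReal.tsum_mul_left, ENNReal.tsum_geometric]

theorem exists_nat_log_one_add_mul_lt {a ε : ℝ} (ha : 0 < a) (hε : 0 < ε) :
    ∃ k : ℕ, 1 ≤ k ∧ log (1 + a * k) < k * ε := by
  have htend : Tendsto (fun x : ℝ => 1 + a * x) atTop atTop :=
    tendsto_atTop_add_const_left _ 1 (tendsto_id.const_mul_atTop ha)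
  have hO : (fun x : ℝ => 1 + a * x) =O[atTop] id :=
    (Asymptotics.isLittleO_const_id_atTop 1).isBigO.add
      ((Asymptotics.isBigO_refl id atTop).const_mul_left a)
  have ho := (isLittleO_log_id_atTop.comp_tendsto htend).trans_isBigO hO
  have hev : ∀ᶠ x : ℝ in atTop, log (1 + a * x) < x * ε := by
    filter_upwards [ho.def (half_pos hε), eventually_gt_atTop 0] with x hx hx0
    rw [Function.comp_apply, id, Real.norm_eq_abs, Real.norm_of_nonneg hx0.le] at hx
    nlinarith [le_abs_self (log (1 + a * x))]
  obtain ⟨k, hlog, hk⟩ :=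
    ((tendsto_natCast_atTop_atTop.eventually hev).and (eventually_ge_atTop 1)).exists
  exact ⟨k, hk, hlog⟩

section Measure

variable {Ω : Type*} [MeasurableSpace Ω] {μ : Measure Ω}

theorem measurable_sInf_setOf_mem {E : ℕ → Set Ω} (hE : ∀ n, MeasurableSet (E n)) :
    Measurable fun ω => sInf {n | ω ∈ E n} := by
  classical
  -- Off `⋃ E` every `n` is admitted, so that `Nat.find` returns `0 = sInf ∅` there.
  have hp : ∀ ω, ∃ n, ω ∈ E n ∨ ω ∉ ⋃ m, E m := fun ω => by
    by_cases h : ω ∈ ⋃ m, E m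
    · exact (Set.mem_iUnion.1 h).imp fun _ => .inl
    · exact ⟨0, .inr h⟩
  convert measurable_find hp fun n => (hE n).union (MeasurableSet.iUnion hE).compl with ω
  by_cases h : ω ∈ ⋃ m, E m
  · rw [Nat.sInf_def (s := {n | ω ∈ E n}) (Set.mem_iUnion.1 h)]
    exact Nat.find_congr' (by simp [h])
  · have hempty : {n | ω ∈ E n} = ∅ := by simpa [Set.eq_empty_iff_forall_notMem] using h
    rw [hempty, Nat.sInf_empty, eq_comm, Nat.find_eq_zero]
    exact .inr h

theorem measurable_sum_range {E : Type*} [AddCommMonoid E] [MeasurableSpace E]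
    [MeasurableAdd₂ E] {T : Ω → ℕ} (hT : Measurable T) {x : ℕ → Ω → E}
    (hx : ∀ i, Measurable (x i)) : Measurable fun ω => ∑ i ∈ range (T ω), x i ω :=
  (measurable_from_prod_countable_left (f := fun p : Ω × ℕ => ∑ i ∈ range p.2, x i p.1)
    fun n => measurable_sum (range n) fun i _ => hx i).comp (measurable_id.prodMk hT)

theorem lintegral_natCast_eq_tsum_measure_lt {T : Ω → ℕ} (hT : Measurable T) :
    ∫⁻ ω, (T ω : ℝ≥0∞) ∂μ = ∑' n, μ {ω | n < T ω} := by
  have hsets : ∀ n, MeasurableSet {ω | n < T ω} := fun n => hT measurableSet_Ioi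
  have hcount : ∀ ω, (T ω : ℝ≥0∞) = ∑' n, {ω | n < T ω}.indicator 1 ω := fun ω => by
    rw [tsum_eq_sum (s := range (T ω)) fun n hn => by simpa using hn]
    simp only [Set.indicator_apply, Set.mem_ofPred_eq, Pi.one_apply, sum_boole]
    rw [filter_true_of_mem fun n hn => mem_range.1 hn, card_range]
  simp_rw [hcount]
  rw [lintegral_tsum fun n => (measurable_one.indicator (hsets n)).aemeasurable]
  simp_rw [lintegral_indicator_one (hsets _)]

theorem exists_measure_le_and_le_pos {f g : Ω → ℝ} (h : 0 < μ {ω | 0 < f ω}) :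
    ∃ ε > 0, ∃ c > 0, 0 < μ {ω | ε ≤ f ω ∧ g ω ≤ c} := by
  have hcover : {ω | 0 < f ω} ⊆
      ⋃ p : ℕ × ℕ, {ω | 1 / ((p.1 : ℝ) + 1) ≤ f ω ∧ g ω ≤ p.2 + 1} :=
    fun ω (hω : 0 < f ω) => by
      obtain ⟨n, hn⟩ := exists_nat_one_div_lt hω
      obtain ⟨m, hm⟩ := exists_nat_ge (g ω)
      exact Set.mem_iUnion.2 ⟨(n, m), hn.le, by linarith⟩
  obtain ⟨⟨n, m⟩, hpos⟩ :=
    exists_measure_pos_of_not_measure_iUnion_null (h.trans_le (measure_mono hcover)).ne'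
  exact ⟨_, Nat.one_div_pos_of_nat, _, Nat.cast_add_one_pos m, hpos⟩

theorem integral_max_sub_pos [IsFiniteMeasure μ] {f : Ω → ℝ} (hf : Measurable f)
    (hf0 : ∀ ω, 0 ≤ f ω) {R : ℝ} (h : 0 < μ {ω | f ω < R}) :
    0 < ∫ ω, max (R - f ω) 0 ∂μ := by
  have hint : Integrable (fun ω => max (R - f ω) 0) μ :=
    .of_bound ((hf.const_sub R).max measurable_const).aestronglyMeasurable (max R 0)
      (ae_of_all _ fun ω => by
        rw [Real.norm_of_nonneg (le_max_right _ _)]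
        exact max_le_max (by linarith [hf0 ω]) le_rfl)
  refine (integral_pos_iff_support_of_nonneg (f := fun ω => max (R - f ω) 0)
    (fun ω => le_max_right _ _) hint).2 (h.trans_le ?_)
  exact measure_mono fun ω hω => (lt_max_of_lt_left (sub_pos.2 hω)).ne'

theorem integral_max_sub_log_one_add_mul_pos [IsFiniteMeasure μ] {S : Ω → ℝ}
    (hS : Measurable S) (hS0 : ∀ ω, 0 ≤ S ω) {a b R : ℝ} (ha : 0 ≤ a)
    (hlog : log (1 + a * b) < R) (h : 0 < μ {ω | S ω ≤ b}) :
    0 < ∫ ω, max (R - log (1 + a * S ω)) 0 ∂μ := by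
  have hpos : ∀ ω, 1 ≤ 1 + a * S ω := fun ω =>
    le_add_of_nonneg_right (mul_nonneg ha (hS0 ω))
  refine integral_max_sub_pos (by fun_prop) (fun ω => log_nonneg (hpos ω))
    (h.trans_le (measure_mono fun ω (hω : S ω ≤ b) => ?_))
  exact (log_le_log (zero_lt_one.trans_le (hpos ω)) (by gcongr)).trans_lt hlog

end Measure

/-- `sInf ∅ = 0`: the passage time is `0` when the partial sums never reach `R`. -/
noncomputable def passageTime (R : ℝ) (x : ℕ → ℝ) : ℕ :=
  sInf {t | 1 ≤ t ∧ R ≤ ∑ i ∈ range t, x i}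

section PassageTime

variable {R : ℝ} {x : ℕ → ℝ} {n : ℕ}

theorem passageTime_le (hn : 1 ≤ n) (h : R ≤ ∑ i ∈ range n, x i) : passageTime R x ≤ n :=
  Nat.sInf_le ⟨hn, h⟩

theorem one_le_passageTime (hn : 1 ≤ n) (h : R ≤ ∑ i ∈ range n, x i) :
    1 ≤ passageTime R x :=
  (Nat.sInf_mem (s := {t | 1 ≤ t ∧ R ≤ ∑ i ∈ range t, x i}) ⟨n, hn, h⟩).1

theorem sum_lt_of_lt_passageTime (hn : 1 ≤ n) (h : n < passageTime R x) :
    ∑ i ∈ range n, x i < R := by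
  by_contra! h'
  exact (passageTime_le hn h').not_gt h

theorem measurable_passageTime {Ω : Type*} [MeasurableSpace Ω] {x : ℕ → Ω → ℝ}
    (hx : ∀ i, Measurable (x i)) (R : ℝ) : Measurable fun ω => passageTime R fun i => x i ω :=
  measurable_sInf_setOf_mem fun t => (MeasurableSet.const (1 ≤ t)).inter
    (measurableSet_le measurable_const (measurable_sum _ fun i _ => hx i))

end PassageTime

section Independent

variable {Ω ι α : Type*} [MeasurableSpace Ω] [MeasurableSpace α] {μ : Measure Ω}
  {ν : Measure α}

theorem measure_biInter_preimage_eq_pow {X : ι → Ω → α} (hX : ∀ i, Measurable (X i))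
    (hind : iIndepFun X μ) (hident : ∀ i, μ.map (X i) = ν) (s : Finset ι) {S : Set α}
    (hS : MeasurableSet S) : μ (⋂ i ∈ s, X i ⁻¹' S) = ν S ^ #s := by
  rw [hind.measure_inter_preimage_eq_mul s fun _ _ => hS]
  simp_rw [← Measure.map_apply (hX _) hS, hident, prod_const]

variable {X : ℕ → Ω → α} {L : α → ℝ}

open scoped Classical in
theorem measure_card_filter_lt_le (hX : ∀ i, Measurable (X i)) (hind : iIndepFun X μ)
    (hident : ∀ i, μ.map (X i) = ν) {S : Set α} (hS : MeasurableSet S) (n k : ℕ) :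
    μ {ω | #{i ∈ range n | X i ω ∈ S} < k} ≤ k * ν Sᶜ ^ (n / k) := by
  set m := n / k
  have hsub : {ω | #{i ∈ range n | X i ω ∈ S} < k} ⊆
      ⋃ j ∈ range k, ⋂ i ∈ Ico (j * m) (j * m + m), X i ⁻¹' Sᶜ := by
    intro ω hω
    by_contra hnot
    simp only [Set.mem_iUnion, Set.mem_iInter, Set.mem_preimage, Set.mem_compl_iff, mem_range,
      not_exists, not_forall, not_not] at hnot
    have hblocks := le_card_filter_range_mul fun j hj => by simpa using hnot j hj
    have hmono : #{i ∈ range (k * m) | X i ω ∈ S} ≤ #{i ∈ range n | X i ω ∈ S} :=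
      card_le_card (filter_subset_filter _ (range_subset_range.2 (Nat.mul_div_le n k)))
    exact (hblocks.trans hmono).not_gt hω
  calc μ {ω | #{i ∈ range n | X i ω ∈ S} < k}
      ≤ ∑ j ∈ range k, μ (⋂ i ∈ Ico (j * m) (j * m + m), X i ⁻¹' Sᶜ) :=
        (measure_mono hsub).trans (measure_biUnion_finset_le _ _)
    _ = ∑ j ∈ range k, ν Sᶜ ^ m := sum_congr rfl fun j _ => by
        rw [measure_biInter_preimage_eq_pow hX hind hident _ hS.compl, Nat.card_Ico,
          Nat.add_sub_cancel_left]
    _ = k * ν Sᶜ ^ m := by rw [sum_const, card_range, nsmul_eq_mul]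

theorem measure_lt_passageTime_le [IsProbabilityMeasure μ] (hX : ∀ i, Measurable (X i))
    (hind : iIndepFun X μ) (hident : ∀ i, μ.map (X i) = ν) (hL : Measurable L)
    (hL0 : ∀ i ω, 0 ≤ L (X i ω)) {ε R : ℝ} (hε : 0 ≤ ε) {k : ℕ} (hk : 1 ≤ k)
    (hR : R ≤ k * ε) (n : ℕ) :
    μ {ω | n < passageTime R fun i => L (X i ω)} ≤ k * ν {a | L a < ε} ^ (n / k) := by
  rcases Nat.eq_zero_or_pos n with rfl | hn
  · simpa using prob_le_one.trans (Nat.one_le_cast.2 hk)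
  classical
  have hS : MeasurableSet {a | ε ≤ L a} := measurableSet_le measurable_const hL
  refine (measure_mono fun ω hω => ?_).trans
    ((measure_card_filter_lt_le hX hind hident hS n k).trans_eq (by simp [Set.compl_ofPred]))
  simp only [Set.mem_ofPred_eq] at hω ⊢
  by_contra! hcard
  have hsum := card_filter_mul_le_sum (fun i _ => hL0 i ω) ε (s := range n)
  have hk : (k : ℝ) * ε ≤ #{i ∈ range n | ε ≤ L (X i ω)} * ε :=
    mul_le_mul_of_nonneg_right (by exact_mod_cast hcard) hε
  linarith [sum_lt_of_lt_passageTime hn hω]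

theorem lintegral_passageTime_lt_top [IsProbabilityMeasure μ] (hX : ∀ i, Measurable (X i))
    (hind : iIndepFun X μ) (hident : ∀ i, μ.map (X i) = ν) (hL : Measurable L)
    (hL0 : ∀ i ω, 0 ≤ L (X i ω)) {ε : ℝ} (hε : 0 < ε) (hpos : 0 < ν {a | ε ≤ L a})
    (R : ℝ) :
    ∫⁻ ω, (passageTime R fun i => L (X i ω) : ℝ≥0∞) ∂μ < ∞ := by
  obtain ⟨k, hk⟩ := exists_nat_gt (R / ε)
  have hR : R ≤ (k + 1 : ℕ) * ε := by
    rw [div_lt_iff₀ hε] at hk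
    push_cast
    nlinarith
  have : IsProbabilityMeasure ν :=
    hident 0 ▸ Measure.isProbabilityMeasure_map (hX 0).aemeasurable
  have hmiss : ν {a | L a < ε} < 1 := by
    have hcompl : {a | L a < ε} = {a | ε ≤ L a}ᶜ := by ext; simp
    rw [hcompl, prob_compl_eq_one_sub (measurableSet_le measurable_const hL)]
    exact ENNReal.sub_lt_self ENNReal.one_ne_top one_ne_zero hpos.ne'
  calc ∫⁻ ω, (passageTime R fun i => L (X i ω) : ℝ≥0∞) ∂μ
      = ∑' n, μ {ω | n < passageTime R fun i => L (X i ω)} :=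
        lintegral_natCast_eq_tsum_measure_lt (measurable_passageTime (fun i => hL.comp (hX i)) R)
    _ ≤ ∑' n, ((k + 1 : ℕ) : ℝ≥0∞) * ν {a | L a < ε} ^ (n / (k + 1)) :=
        ENNReal.tsum_le_tsum fun n =>
          measure_lt_passageTime_le hX hind hident hL hL0 hε.le k.succ_pos hR n
    _ = (k + 1 : ℕ) * ((k + 1 : ℕ) * (1 - ν {a | L a < ε})⁻¹) := by
        rw [ENNReal.tsum_mul_left, ENNReal.tsum_pow_div]
    _ < ∞ := by
        have := ENNReal.inv_ne_top.2 (tsub_pos_of_lt hmiss).ne'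
        finiteness

theorem measure_one_le_passageTime_and_sum_le_pos (hX : ∀ i, Measurable (X i))
    (hind : iIndepFun X μ) (hident : ∀ i, μ.map (X i) = ν) {C : α → ℝ} (hL : Measurable L)
    (hC : Measurable C) (hC0 : ∀ i ω, 0 ≤ C (X i ω)) {ε c R : ℝ} {k : ℕ} (hk : 1 ≤ k)
    (hR : R ≤ k * ε) (hgood : 0 < ν {a | ε ≤ L a ∧ C a ≤ c}) :
    0 < μ {ω | 1 ≤ (passageTime R fun i => L (X i ω)) ∧
      ∑ i ∈ range (passageTime R fun i => L (X i ω)), C (X i ω) ≤ k * c} := by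
  have hS : MeasurableSet {a | ε ≤ L a ∧ C a ≤ c} :=
    (measurableSet_le measurable_const hL).inter (measurableSet_le hC measurable_const)
  have hG := measure_biInter_preimage_eq_pow hX hind hident (range k) hS
  rw [card_range] at hG
  refine (ENNReal.pow_pos hgood k).trans_le (hG ▸ measure_mono fun ω hω => ?_)
  simp only [Set.mem_iInter, Set.mem_preimage, mem_range, Set.mem_ofPred_eq] at hω
  have hsum : R ≤ ∑ i ∈ range k, L (X i ω) :=
    hR.trans <| by
      simpa using card_nsmul_le_sum (range k) _ ε fun i hi => (hω i (mem_range.1 hi)).1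
  refine ⟨one_le_passageTime hk hsum, ?_⟩
  calc ∑ i ∈ range (passageTime R fun i => L (X i ω)), C (X i ω)
      ≤ ∑ i ∈ range k, C (X i ω) :=
        sum_le_sum_of_subset_of_nonneg (range_subset_range.2 (passageTime_le hk hsum))
          fun i _ _ => hC0 i ω
    _ ≤ ∑ i ∈ range k, c := sum_le_sum fun i hi => (hω i (mem_range.1 hi)).2
    _ = k * c := by simp

end Independent

/-- Remark 4 of the paper: for an i.i.d. block-fading sequence of channel-gain triples
`(H_m(i), H_e(i), H_z(i))` with `P_t > 0`, `P_j ≥ 0` and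
`P(H_m/(1 + P_j H_z) > 0) > 0`, there exists a rate `R > 0` such that, with
`T = inf {t ≥ 1 | Σ_{i<t} ln(1 + P_t H_m(i)/(1 + P_j H_z(i))) ≥ R}`, we have
`E[T] < ∞` and `E[(R − ln(1 + P_t Σ_{i<T} H_e(i)))⁺] > 0`; consequently the
renewal-reward ratio is strictly positive, so `R_s^{1-bit} > 0`. -/
theorem one_bit_feedback_positive_rate
    {Ω : Type*} [MeasurableSpace Ω] (μ : Measure Ω) [IsProbabilityMeasure μ]
    (Hm He Hz : ℕ → Ω → ℝ)
    (hmeas : ∀ i, Measurable (fun ω => (Hm i ω, He i ω, Hz i ω)))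
    (hindep : iIndepFun
      (fun i ω => (Hm i ω, He i ω, Hz i ω)) μ)
    (hident : ∀ i, μ.map (fun ω => (Hm i ω, He i ω, Hz i ω))
      = μ.map (fun ω => (Hm 0 ω, He 0 ω, Hz 0 ω)))
    (h0 : ∀ i ω, 0 ≤ Hm i ω ∧ 0 ≤ He i ω ∧ 0 ≤ Hz i ω)
    (Pt Pj : ℝ) (hPt : 0 < Pt) (hPj : 0 ≤ Pj)
    (hpos : 0 < μ {ω | 0 < Hm 0 ω / (1 + Pj * Hz 0 ω)}) :
    ∃ R : ℝ, 0 < R ∧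
      ∀ T : Ω → ℕ,
        (∀ ω, T ω = sInf {t : ℕ | 1 ≤ t ∧
            R ≤ ∑ i ∈ Finset.range t,
              Real.log (1 + Pt * Hm i ω / (1 + Pj * Hz i ω))}) →
        (∫⁻ ω, (T ω : ℝ≥0∞) ∂μ) < ⊤ ∧
        0 < ∫ ω, max (R - Real.log (1 + Pt * ∑ i ∈ Finset.range (T ω), He i ω)) 0 ∂μ ∧
        0 < (∫ ω, max (R - Real.log (1 + Pt * ∑ i ∈ Finset.range (T ω), He i ω)) 0 ∂μ)
              / (∫⁻ ω, (T ω : ℝ≥0∞) ∂μ).toReal := by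
  set X : ℕ → Ω → ℝ × ℝ × ℝ := fun i ω => (Hm i ω, He i ω, Hz i ω)
  set L : ℝ × ℝ × ℝ → ℝ := fun a => log (1 + Pt * a.1 / (1 + Pj * a.2.2))
  have hL : Measurable L := by fun_prop
  have hL0 : ∀ i ω, 0 ≤ L (X i ω) := fun i ω => by
    obtain ⟨hm, -, hz⟩ := h0 i ω
    exact log_nonneg (le_add_of_nonneg_right (by positivity))
  have hLpos : 0 < μ.map (X 0) {a | 0 < L a} :=
    (hpos.trans_le <| measure_mono fun ω (hω : 0 < Hm 0 ω / (1 + Pj * Hz 0 ω)) =>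
      log_pos <| lt_add_of_pos_right _ <| by rw [mul_div_assoc]; exact mul_pos hPt hω).trans_eq
    (Measure.map_apply (hmeas 0) (measurableSet_lt measurable_const hL)).symm
  obtain ⟨ε, hε, c, hc, hgood⟩ := exists_measure_le_and_le_pos (g := fun a => a.2.1) hLpos
  obtain ⟨k, hk, hlog⟩ := exists_nat_log_one_add_mul_lt (mul_pos hPt hc) hε
  refine ⟨k * ε, by positivity, fun T hT => ?_⟩
  have hTeq : T = fun ω => passageTime (k * ε) fun i => L (X i ω) := funext hT
  have hTmeas : Measurable T := hTeq ▸ measurable_passageTime (fun i => hL.comp (hmeas i)) _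
  have hET : ∫⁻ ω, (T ω : ℝ≥0∞) ∂μ < ∞ := hTeq ▸ lintegral_passageTime_lt_top hmeas hindep
    hident hL hL0 hε (hgood.trans_le (measure_mono fun a ha => ha.1)) (k * ε)
  have hG : 0 < μ {ω | 1 ≤ T ω ∧ ∑ i ∈ range (T ω), He i ω ≤ k * c} :=
    hTeq ▸ measure_one_le_passageTime_and_sum_le_pos hmeas hindep hident hL
      (measurable_fst.comp measurable_snd) (fun i ω => (h0 i ω).2.1) hk le_rfl hgood
  have hETpos : 0 < ∫⁻ ω, (T ω : ℝ≥0∞) ∂μ :=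
    (lintegral_pos_iff_support (by fun_prop)).2 <| hG.trans_le <|
      measure_mono fun ω hω => Nat.cast_ne_zero.2 (Nat.one_le_iff_ne_zero.1 hω.1)
  have hreward := integral_max_sub_log_one_add_mul_pos
    (measurable_sum_range hTmeas fun i => measurable_fst.comp (measurable_snd.comp (hmeas i)))
    (fun ω => sum_nonneg fun i _ => (h0 i ω).2.1) hPt.le (by rwa [mul_assoc, mul_comm c] at hlog)
    (hG.trans_le (measure_mono fun ω hω => hω.2))
  exact ⟨hET, hreward, div_pos hreward (ENNReal.toReal_pos hETpos.ne' hET.ne)⟩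
end
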